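/- arXiv:2512.11721 — 4 statements merged into one kernel-verified Lean document; each statement's English description precedes it below -/
import Mathlib

section
/- If u(x,t) = φ(x−ct) is a monotone traveling front solution of u_t = (D(u)u_x)_x + f(u) whose C¹ profile φ satisfies (D(φ)φ')' + cφ' + f(φ) = 0 on ℝ, φ'≥0, lim_{ξ→−∞} φ(ξ) = 0, lim_{ξ→+∞} φ(ξ) = 1, 0 ≤ φ ≤ 1, with D(φ)φ' → 0 as ξ → ±∞ and ∫_ℝ D(φ(ξ))φ'(ξ)² dξ finite and positive, then c · ∫_ℝ D(φ(ξ))φ'(ξ)² dξ = − ∫_0^1 D(u)f(u) du. In particular there exist no monotone nondecreasing fronts from 0 to 1 with speed c > 0 when ∫_0^1 D(u)f(u) du > 0, and no monotone nonincreasing fronts from 1 to 0 with speed c > 0 when ∫_0^1 D(u)f(u) du < 0. -/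
open MeasureTheory Filter Topology Asymptotics

noncomputable section

/-- Bistable (Nagumo) reaction-diffusion data: a degenerate diffusion coefficient `D`
(`D(0)=0`, `D>0` on `(0,1]`, `D'>0` on `[0,1]`, `D` of class `C²`) and a bistable
reaction `f` of Nagumo type with zeros `0, α, 1`. -/
structure NagumoSetup : Type where
  D : ℝ → ℝ
  f : ℝ → ℝ
  α : ℝ
  hα : α ∈ Set.Ioo (0:ℝ) 1
  hD_C2 : ContDiff ℝ 2 D
  hD0 : D 0 = 0
  hD_pos : ∀ u ∈ Set.Ioc (0:ℝ) 1, 0 < D u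
  hD'_pos : ∀ u ∈ Set.Icc (0:ℝ) 1, 0 < deriv D u
  hf_C2 : ContDiff ℝ 2 f
  hf0 : f 0 = 0
  hfα : f α = 0
  hf1 : f 1 = 0
  hf'0 : deriv f 0 < 0
  hf'1 : deriv f 1 < 0
  hf'α : 0 < deriv f α
  hf_pos : ∀ u ∈ Set.Ioo α 1, 0 < f u
  hf_neg : ∀ u ∈ Set.Ioo (0:ℝ) α, f u < 0

/-- A `C¹` traveling-wave profile with speed `c` for `u_t = (D(u)u_x)_x + f(u)`:
it satisfies `(D(φ)φ')' + cφ' + f(φ) = 0` on `ℝ`, takes values in `[0,1]`,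
the flux `D(φ)φ'` is differentiable and tends to `0` at `±∞`, and
`∫_ℝ D(φ)φ'² dξ` is finite. -/
structure TWProfile (S : NagumoSetup) (φ : ℝ → ℝ) (c : ℝ) : Prop where
  hC1 : ContDiff ℝ 1 φ
  hrange : ∀ x, φ x ∈ Set.Icc (0:ℝ) 1
  hflux : Differentiable ℝ fun x => S.D (φ x) * deriv φ x
  hode : ∀ x, deriv (fun y => S.D (φ y) * deriv φ y) x + c * deriv φ x + S.f (φ x) = 0
  hflux_bot : Tendsto (fun x => S.D (φ x) * deriv φ x) atBot (𝓝 0)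
  hflux_top : Tendsto (fun x => S.D (φ x) * deriv φ x) atTop (𝓝 0)
  hint : Integrable fun x => S.D (φ x) * (deriv φ x) ^ 2

/-! Multiplying the profile equation by the flux `F = D(φ)φ'` shows that the energy
`F²/2 + ∫₀^φ D f` has derivative `-c D(φ)φ'²`. The flux vanishes at `±∞`, so integrating over `ℝ`
gives `-c ∫ D(φ)φ'² = ∫_{φ(-∞)}^{φ(+∞)} D f`; for `c > 0` and a nontrivial front this forces the
sign of `∫₀¹ D f`. -/

theorem hasDerivAt_flux_energy {D g φ : ℝ → ℝ} {c x : ℝ} (hD : Continuous D) (hg : Continuous g)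
    (hφ : DifferentiableAt ℝ φ x)
    (hflux : DifferentiableAt ℝ (fun y => D (φ y) * deriv φ y) x)
    (hode : deriv (fun y => D (φ y) * deriv φ y) x + c * deriv φ x + g (φ x) = 0) :
    HasDerivAt (fun y => (D (φ y) * deriv φ y) ^ 2 / 2 + ∫ u in (0:ℝ)..φ y, D u * g u)
      (-(c * (D (φ x) * deriv φ x ^ 2))) x := by
  have hprim : HasDerivAt (fun y => ∫ u in (0:ℝ)..φ y, D u * g u)
      (D (φ x) * g (φ x) * deriv φ x) x :=
    ((hD.mul hg).integral_hasStrictDerivAt 0 (φ x)).hasDerivAt.comp x hφ.hasDerivAt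
  refine (((hflux.hasDerivAt.pow 2).div_const 2).add hprim).congr_deriv ?_
  linear_combination D (φ x) * deriv φ x * hode

theorem mul_integral_flux_sq_eq {D g φ : ℝ → ℝ} {c A B : ℝ} (hD : Continuous D)
    (hg : Continuous g) (hφ : Differentiable ℝ φ)
    (hflux : Differentiable ℝ fun y => D (φ y) * deriv φ y)
    (hode : ∀ x, deriv (fun y => D (φ y) * deriv φ y) x + c * deriv φ x + g (φ x) = 0)
    (hint : Integrable fun x => D (φ x) * deriv φ x ^ 2)
    (hflux_bot : Tendsto (fun x => D (φ x) * deriv φ x) atBot (𝓝 0))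
    (hflux_top : Tendsto (fun x => D (φ x) * deriv φ x) atTop (𝓝 0))
    (hbot : Tendsto φ atBot (𝓝 A)) (htop : Tendsto φ atTop (𝓝 B)) :
    c * ∫ x, D (φ x) * deriv φ x ^ 2 = -∫ u in A..B, D u * g u := by
  have hDg : Continuous fun u => D u * g u := hD.mul hg
  have hG : Continuous fun v => ∫ u in (0:ℝ)..v, D u * g u :=
    intervalIntegral.continuous_primitive (fun a b => hDg.intervalIntegrable a b) 0
  have hE := integral_of_hasDerivAt_of_tendsto
    (fun x => hasDerivAt_flux_energy hD hg (hφ x) (hflux x) (hode x)) (hint.const_mul c).neg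
    (by simpa using ((hflux_bot.pow 2).div_const 2).add ((hG.tendsto A).comp hbot))
    (by simpa using ((hflux_top.pow 2).div_const 2).add ((hG.tendsto B).comp htop))
  rw [integral_neg, integral_const_mul] at hE
  rw [← intervalIntegral.integral_interval_sub_left (hDg.intervalIntegrable 0 B)
    (hDg.intervalIntegrable 0 A)]
  linarith

theorem TWProfile.mul_integral_eq {S : NagumoSetup} {φ : ℝ → ℝ} {c A B : ℝ}
    (h : TWProfile S φ c) (hbot : Tendsto φ atBot (𝓝 A)) (htop : Tendsto φ atTop (𝓝 B)) :
    c * ∫ x, S.D (φ x) * deriv φ x ^ 2 = -∫ u in A..B, S.D u * S.f u :=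
  mul_integral_flux_sq_eq S.hD_C2.continuous S.hf_C2.continuous
    (h.hC1.differentiable one_ne_zero) h.hflux h.hode h.hint h.hflux_bot h.hflux_top hbot htop

/-- For any monotone traveling front the identity
`c ∫ D(φ)φ'² = -∫₀¹ D f` holds; in particular there are no nondecreasing fronts from
`0` to `1` with `c > 0` when `∫₀¹ Df > 0`, and no nonincreasing fronts from `1` to `0`
with `c > 0` when `∫₀¹ Df < 0`. -/
theorem statement0 (S : NagumoSetup) :
    (∀ (φ : ℝ → ℝ) (c : ℝ), TWProfile S φ c → (∀ x, 0 ≤ deriv φ x) →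
      Tendsto φ atBot (𝓝 0) → Tendsto φ atTop (𝓝 1) →
      (0 < ∫ x, S.D (φ x) * (deriv φ x) ^ 2) →
      c * ∫ x, S.D (φ x) * (deriv φ x) ^ 2 = - ∫ u in (0:ℝ)..1, S.D u * S.f u) ∧
    ((0 < ∫ u in (0:ℝ)..1, S.D u * S.f u) → ∀ c : ℝ, 0 < c →
      ¬ ∃ φ : ℝ → ℝ, TWProfile S φ c ∧ (∀ x, 0 ≤ deriv φ x) ∧
        Tendsto φ atBot (𝓝 0) ∧ Tendsto φ atTop (𝓝 1) ∧
        0 < ∫ x, S.D (φ x) * (deriv φ x) ^ 2) ∧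
    ((∫ u in (0:ℝ)..1, S.D u * S.f u) < 0 → ∀ c : ℝ, 0 < c →
      ¬ ∃ φ : ℝ → ℝ, TWProfile S φ c ∧ (∀ x, deriv φ x ≤ 0) ∧
        Tendsto φ atBot (𝓝 1) ∧ Tendsto φ atTop (𝓝 0) ∧
        0 < ∫ x, S.D (φ x) * (deriv φ x) ^ 2) := by
  refine ⟨fun φ c h _ hbot htop _ => h.mul_integral_eq hbot htop, ?_, ?_⟩
  · rintro hpos c hc ⟨φ, h, -, hbot, htop, hI⟩
    have := h.mul_integral_eq hbot htop
    linarith [mul_pos hc hI]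
  · rintro hneg c hc ⟨φ, h, -, hbot, htop, hI⟩
    have := h.mul_integral_eq hbot htop
    rw [intervalIntegral.integral_symm] at this
    linarith [mul_pos hc hI]
end
end

section
/- If ∫_0^1 D(u)f(u) du = 0, then there exist two stationary monotone front solutions (speed c = 0) of u_t = (D(u)u_x)_x + f(u): a C¹ function φ: ℝ → [0,1] solving (D(φ)φ_x)_x + f(φ) = 0 on ℝ that is nondecreasing with lim_{x→−∞} φ(x) = 0 and lim_{x→+∞} φ(x) = 1, and a C¹ function solving the same equation that is nonincreasing with lim_{x→−∞} φ(x) = 1 and lim_{x→+∞} φ(x) = 0. -/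
/-!
Multiplying `(D(φ) φ')' + f(φ) = 0` by the flux `w = D(φ) φ'` gives `(w² / 2)' = -(F ∘ φ)'` with
`F(u) = ∫₀ᵘ D f`. The bistable sign pattern and `F(1) = 0` make `F < 0` on `(0, 1)`, so a front
from 0 to 1 has flux `w = P(φ)` with `P = √(-2F)`, and separating variables in
`φ' = P(φ) / D(φ)` gives its inverse `X(u) = ∫_α^u D / P`.
Near 0 we have `D ≍ u` and `P ≍ u^{3/2}` (this uses `f'(0) < 0`), so `D / P ≍ u^{-1/2}` is
integrable: `X` is bounded below by `x₀`, the front is extended by `0` on `(-∞, x₀]`, and at the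
sharp edge `φ ≲ (x - x₀)²` and `P(φ) ≲ φ` vanish to second order, so `φ` is `C¹` and the flux is
differentiable with derivative `-f(0) = 0`. Near 1 we have `P ≲ 1 - u`, so `D / P ≳ 1 / (1 - u)`
is not integrable and `φ → 1` only as `x → ∞`. Reflecting `x ↦ -x` gives the decreasing front.
-/

open MeasureTheory Filter Topology Asymptotics

noncomputable section

open Set

theorem sub_le_sub_of_hasDerivAt_of_le {f g f' g' : ℝ → ℝ} {a b : ℝ} (hab : a ≤ b)
    (hf : ∀ x ∈ Icc a b, HasDerivAt f (f' x) x) (hg : ∀ x ∈ Icc a b, HasDerivAt g (g' x) x)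
    (hle : ∀ x ∈ Ioo a b, f' x ≤ g' x) : f b - f a ≤ g b - g a := by
  have hmono : MonotoneOn (g - f) (Icc a b) := by
    refine monotoneOn_of_hasDerivWithinAt_nonneg (convex_Icc a b) (f' := g' - f')
      (fun x hx => ((hg x hx).sub (hf x hx)).continuousAt.continuousWithinAt)
      (fun x hx => ((hg x (interior_subset hx)).sub (hf x (interior_subset hx))).hasDerivWithinAt)
      fun x hx => ?_
    rw [interior_Icc] at hx
    exact sub_nonneg.2 (hle x hx)
  have := hmono (left_mem_Icc.2 hab) (right_mem_Icc.2 hab) hab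
  simp only [Pi.sub_apply] at this
  linarith

theorem hasDerivAt_zero_of_abs_sub_le_sq {g : ℝ → ℝ} {x C : ℝ}
    (h : ∀ y, |g y - g x| ≤ C * (y - x) ^ 2) : HasDerivAt g 0 x := by
  rw [hasDerivAt_iff_isLittleO]
  simp only [smul_zero, sub_zero]
  refine IsBigO.trans_isLittleO (IsBigO.of_bound C (Eventually.of_forall fun y => ?_))
    (isLittleO_pow_sub_sub x one_lt_two)
  simpa [Real.norm_eq_abs] using h y

theorem ContDiff.exists_abs_sub_le {g : ℝ → ℝ} (hg : ContDiff ℝ 1 g) (a b : ℝ) :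
    ∃ K > 0, ∀ x ∈ Icc a b, ∀ y ∈ Icc a b, |g x - g y| ≤ K * |x - y| := by
  obtain ⟨K, hK⟩ :=
    hg.contDiffOn.exists_lipschitzOnWith one_ne_zero (convex_Icc a b) isCompact_Icc
  refine ⟨K + 1, by positivity, fun x hx y hy => ?_⟩
  have := hK.dist_le_mul x hx y hy
  rw [Real.dist_eq, Real.dist_eq] at this
  nlinarith [abs_nonneg (x - y)]

theorem Real.sqrt_mul_pow_three {c u : ℝ} (hc : 0 ≤ c) (hu : 0 ≤ u) :
    √(c * u ^ 3) = √c * (u * √u) := by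
  rw [Real.sqrt_mul hc, show u ^ 3 = u ^ 2 * u by ring, Real.sqrt_mul (sq_nonneg u),
    Real.sqrt_sq hu]

def IsStationarySolution (D f φ : ℝ → ℝ) : Prop :=
  ContDiff ℝ 1 φ ∧ (∀ x, φ x ∈ Icc (0:ℝ) 1) ∧
    Differentiable ℝ (fun x => D (φ x) * deriv φ x) ∧
    ∀ x, deriv (fun y => D (φ y) * deriv φ y) x + f (φ x) = 0

theorem IsStationarySolution.comp_neg {D f φ : ℝ → ℝ} (h : IsStationarySolution D f φ) :
    IsStationarySolution D f (fun x => φ (-x)) := by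
  obtain ⟨hφ, hmem, hflux, heq⟩ := h
  have hflux_neg : (fun y => D (φ (-y)) * deriv (fun x => φ (-x)) y)
      = fun y => -(D (φ (-y)) * deriv φ (-y)) := by
    funext y
    rw [deriv_comp_neg]
    ring
  refine ⟨hφ.comp contDiff_neg, fun x => hmem (-x), ?_, fun x => ?_⟩
  · rw [hflux_neg]
    exact (hflux.comp differentiable_neg).neg
  · rw [hflux_neg, deriv.fun_neg, deriv_comp_neg (fun y => D (φ y) * deriv φ y), neg_neg]
    exact heq (-x)

namespace NagumoSetup

variable (S : NagumoSetup)

def F (u : ℝ) : ℝ := ∫ t in (0:ℝ)..u, S.D t * S.f t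

def P (u : ℝ) : ℝ := √(-2 * S.F u)

def X (u : ℝ) : ℝ := ∫ t in S.α..u, S.D t / S.P t

def x0 : ℝ := sInf (S.X '' Ioo 0 1)

def front (x : ℝ) : ℝ := if S.x0 < x then Function.invFunOn S.X (Ioo 0 1) x else 0

-- At `u = 0` this is `0 / 0 = 0`, the slope of the front at its sharp edge.
def phaseSlope (u : ℝ) : ℝ := S.P u / S.D u

theorem continuous_D : Continuous S.D := S.hD_C2.continuous

theorem continuous_f : Continuous S.f := S.hf_C2.continuous

theorem hasDerivAt_F (u : ℝ) : HasDerivAt S.F (S.D u * S.f u) u :=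
  ((S.continuous_D.mul S.continuous_f).integral_hasStrictDerivAt 0 u).hasDerivAt

theorem continuous_F : Continuous S.F :=
  continuous_iff_continuousAt.2 fun u => (S.hasDerivAt_F u).continuousAt

theorem continuous_P : Continuous S.P := (continuous_const.mul S.continuous_F).sqrt

theorem F_zero : S.F 0 = 0 := intervalIntegral.integral_same

theorem P_zero : S.P 0 = 0 := by simp [P, F_zero]

theorem P_nonneg (u : ℝ) : 0 ≤ S.P u := Real.sqrt_nonneg _

theorem phaseSlope_zero : S.phaseSlope 0 = 0 := by simp [phaseSlope, P_zero]

theorem F_neg (hF : S.F 1 = 0) {u : ℝ} (hu : u ∈ Ioo (0:ℝ) 1) : S.F u < 0 := by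
  obtain ⟨hα0, hα1⟩ := S.hα
  have hF' (s : Set ℝ) (x : ℝ) (_ : x ∈ interior s) :
      HasDerivWithinAt S.F (S.D x * S.f x) (interior s) x :=
    (S.hasDerivAt_F x).hasDerivWithinAt
  rcases le_or_gt u S.α with huα | hαu
  · have hanti : StrictAntiOn S.F (Icc 0 S.α) :=
      strictAntiOn_of_hasDerivWithinAt_neg (convex_Icc 0 S.α) S.continuous_F.continuousOn
        (hF' _) fun x hx => by
          rw [interior_Icc] at hx
          exact mul_neg_of_pos_of_neg (S.hD_pos x ⟨hx.1, hx.2.le.trans hα1.le⟩) (S.hf_neg x hx)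
    simpa [S.F_zero] using hanti ⟨le_rfl, hα0.le⟩ ⟨hu.1.le, huα⟩ hu.1
  · have hmono : StrictMonoOn S.F (Icc S.α 1) :=
      strictMonoOn_of_hasDerivWithinAt_pos (convex_Icc S.α 1) S.continuous_F.continuousOn
        (hF' _) fun x hx => by
          rw [interior_Icc] at hx
          exact mul_pos (S.hD_pos x ⟨hα0.trans hx.1, hx.2.le⟩) (S.hf_pos x hx)
    simpa [hF] using hmono ⟨hαu.le, hu.2.le⟩ ⟨hα1.le, le_rfl⟩ hu.2

theorem P_pos (hF : S.F 1 = 0) {u : ℝ} (hu : u ∈ Ioo (0:ℝ) 1) : 0 < S.P u :=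
  Real.sqrt_pos.2 (by linarith [S.F_neg hF hu])

theorem hasDerivAt_P (hF : S.F 1 = 0) {u : ℝ} (hu : u ∈ Ioo (0:ℝ) 1) :
    HasDerivAt S.P (-(S.D u * S.f u) / S.P u) u := by
  have h : HasDerivAt S.P (-2 * (S.D u * S.f u) / (2 * S.P u)) u :=
    ((S.hasDerivAt_F u).const_mul (-2)).sqrt (by linarith [S.F_neg hF hu])
  convert h using 1
  ring


theorem exists_mul_le_D : ∃ m > 0, ∀ u ∈ Icc (0:ℝ) 1, m * u ≤ S.D u := by
  obtain ⟨a, ha, hmin⟩ := isCompact_Icc.exists_isMinOn (nonempty_Icc.2 zero_le_one)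
    (S.hD_C2.continuous_deriv one_le_two).continuousOn
  refine ⟨deriv S.D a, S.hD'_pos a ha, fun u hu => ?_⟩
  have := (convex_Icc (0:ℝ) 1).mul_sub_le_image_sub_of_le_deriv S.continuous_D.continuousOn
    (S.hD_C2.differentiable two_ne_zero).differentiableOn (fun x hx => hmin (interior_subset hx))
    0 (left_mem_Icc.2 zero_le_one) u hu hu.1
  simpa [S.hD0] using this

theorem exists_D_le_and_abs_f_le : ∃ K > 0, ∀ u ∈ Icc (0:ℝ) 1,
    S.D u ≤ K * u ∧ |S.f u| ≤ K * u ∧ |S.f u| ≤ K * (1 - u) := by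
  obtain ⟨KD, hKD, hD⟩ := (S.hD_C2.of_le one_le_two).exists_abs_sub_le 0 1
  obtain ⟨Kf, hKf, hf⟩ := (S.hf_C2.of_le one_le_two).exists_abs_sub_le 0 1
  refine ⟨max KD Kf, lt_max_of_lt_left hKD, fun u hu => ?_⟩
  have h0 := hD u hu 0 (left_mem_Icc.2 zero_le_one)
  have hf0 := hf u hu 0 (left_mem_Icc.2 zero_le_one)
  have hf1 := hf u hu 1 (right_mem_Icc.2 zero_le_one)
  rw [S.hD0, sub_zero, sub_zero, abs_of_nonneg hu.1] at h0
  rw [S.hf0, sub_zero, sub_zero, abs_of_nonneg hu.1] at hf0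
  rw [S.hf1, sub_zero, abs_sub_comm, abs_of_nonneg (sub_nonneg.2 hu.2)] at hf1
  have hu1 : 0 ≤ 1 - u := sub_nonneg.2 hu.2
  refine ⟨?_, ?_, ?_⟩
  · linarith [le_abs_self (S.D u), mul_le_mul_of_nonneg_right (le_max_left KD Kf) hu.1]
  · linarith [mul_le_mul_of_nonneg_right (le_max_right KD Kf) hu.1]
  · linarith [mul_le_mul_of_nonneg_right (le_max_right KD Kf) hu1]

theorem exists_abs_D_mul_f_le : ∃ K > 0, ∀ u ∈ Icc (0:ℝ) 1,
    |S.D u * S.f u| ≤ K * u ^ 2 ∧ |S.D u * S.f u| ≤ K * (1 - u) := by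
  obtain ⟨m, hm, hmD⟩ := S.exists_mul_le_D
  obtain ⟨K, hK, hb⟩ := S.exists_D_le_and_abs_f_le
  refine ⟨K * K, by positivity, fun u hu => ?_⟩
  obtain ⟨hD, hf0, hf1⟩ := hb u hu
  have hDnn : 0 ≤ S.D u := (mul_nonneg hm.le hu.1).trans (hmD u hu)
  rw [abs_mul, abs_of_nonneg hDnn]
  constructor
  · calc S.D u * |S.f u| ≤ K * u * (K * u) :=
          mul_le_mul hD hf0 (abs_nonneg _) (mul_nonneg hK.le hu.1)
      _ = K * K * u ^ 2 := by ring
  · calc S.D u * |S.f u| ≤ K * 1 * (K * (1 - u)) :=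
          mul_le_mul (hD.trans (by gcongr; exact hu.2)) hf1 (abs_nonneg _) (by positivity)
      _ = K * K * (1 - u) := by ring

theorem exists_f_le_neg_mul : ∃ δ > 0, ∃ c > 0, ∀ u ∈ Ioo 0 δ, S.f u ≤ -(c * u) := by
  have hf0 : HasDerivAt S.f (deriv S.f 0) 0 :=
    ((S.hf_C2.differentiable two_ne_zero) 0).hasDerivAt
  have hslope := (hasDerivAt_iff_tendsto_slope.1 hf0).mono_left (nhdsGT_le_nhdsNE 0)
  have hlt : deriv S.f 0 < deriv S.f 0 / 2 := by linarith [S.hf'0]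
  obtain ⟨δ, hδ, hsub⟩ :=
    mem_nhdsGT_iff_exists_Ioo_subset.1 (hslope.eventually (Iio_mem_nhds hlt))
  refine ⟨δ, hδ, -deriv S.f 0 / 2, by linarith [S.hf'0], fun u hu => ?_⟩
  have : slope S.f 0 u < deriv S.f 0 / 2 := hsub hu
  rw [slope_def_field, S.hf0, sub_zero, sub_zero, div_lt_iff₀ hu.1] at this
  linarith

theorem exists_P_le_mul_sqrt : ∃ B > 0, ∀ u ∈ Icc (0:ℝ) 1, S.P u ≤ B * (u * √u) := by
  obtain ⟨K, hK, hb⟩ := S.exists_abs_D_mul_f_le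
  refine ⟨√K, Real.sqrt_pos.2 hK, fun u hu => ?_⟩
  have hcmp : -S.F u - -S.F 0 ≤ K / 3 * u ^ 3 - K / 3 * 0 ^ 3 :=
    sub_le_sub_of_hasDerivAt_of_le hu.1 (fun x _ => (S.hasDerivAt_F x).neg)
      (fun x _ => (hasDerivAt_pow 3 x).const_mul (K / 3)) fun x hx => by
        have := (hb x ⟨hx.1.le, hx.2.le.trans hu.2⟩).1
        norm_num
        linarith [neg_abs_le (S.D x * S.f x)]
  rw [← Real.sqrt_mul_pow_three hK.le hu.1]
  refine Real.sqrt_le_sqrt ?_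
  rw [S.F_zero] at hcmp
  nlinarith [pow_nonneg hu.1 3]

theorem exists_P_le_mul_one_sub (hF : S.F 1 = 0) :
    ∃ B > 0, ∀ u ∈ Icc (0:ℝ) 1, S.P u ≤ B * (1 - u) := by
  obtain ⟨K, hK, hb⟩ := S.exists_abs_D_mul_f_le
  refine ⟨√K, Real.sqrt_pos.2 hK, fun u hu => ?_⟩
  have hcmp : S.F 1 - S.F u ≤ K * (1 - 1 ^ 2 / 2) - K * (u - u ^ 2 / 2) :=
    sub_le_sub_of_hasDerivAt_of_le hu.2 (fun x _ => S.hasDerivAt_F x)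
      (fun x _ => ((hasDerivAt_id x).sub ((hasDerivAt_pow 2 x).div_const 2)).const_mul K)
      fun x hx => by
        have := (hb x ⟨hu.1.trans hx.1.le, hx.2.le⟩).2
        norm_num
        linarith [le_abs_self (S.D x * S.f x)]
  calc S.P u ≤ √(K * (1 - u) ^ 2) := Real.sqrt_le_sqrt (by rw [hF] at hcmp; nlinarith)
    _ = √K * (1 - u) := by rw [Real.sqrt_mul hK.le, Real.sqrt_sq (sub_nonneg.2 hu.2)]

theorem exists_mul_sqrt_le_P :
    ∃ δ ∈ Ioo (0:ℝ) 1, ∃ b > 0, ∀ u ∈ Icc 0 δ, b * (u * √u) ≤ S.P u := by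
  obtain ⟨m, hm, hmD⟩ := S.exists_mul_le_D
  obtain ⟨δ, hδ, c, hc, hfc⟩ := S.exists_f_le_neg_mul
  have hδ' : min δ (1 / 2) ∈ Ioo (0:ℝ) 1 :=
    ⟨lt_min hδ (by norm_num), (min_le_right _ _).trans_lt (by norm_num)⟩
  refine ⟨min δ (1 / 2), hδ', √(m * c / 3), by positivity, fun u hu => ?_⟩
  have hcmp : m * c / 3 * u ^ 3 - m * c / 3 * 0 ^ 3 ≤ -S.F u - -S.F 0 :=
    sub_le_sub_of_hasDerivAt_of_le hu.1 (fun x _ => (hasDerivAt_pow 3 x).const_mul (m * c / 3))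
      (fun x _ => (S.hasDerivAt_F x).neg) fun x hx => by
        have hx' : x ∈ Icc (0:ℝ) 1 := ⟨hx.1.le, (hx.2.le.trans hu.2).trans hδ'.2.le⟩
        have hD := hmD x hx'
        have hf := hfc x ⟨hx.1, hx.2.trans_le (hu.2.trans (min_le_left _ _))⟩
        norm_num
        nlinarith [mul_nonneg (sub_nonneg.2 hD) (mul_nonneg hc.le hx.1.le),
          mul_nonneg ((mul_nonneg hm.le hx.1.le).trans hD) (sub_nonneg.2 hf)]
  rw [← Real.sqrt_mul_pow_three (by positivity) hu.1]
  refine Real.sqrt_le_sqrt ?_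
  rw [S.F_zero] at hcmp
  nlinarith [pow_nonneg hu.1 3, mul_pos hm hc]

theorem continuousOn_D_div_P (hF : S.F 1 = 0) :
    ContinuousOn (fun t => S.D t / S.P t) (Ioo 0 1) :=
  S.continuous_D.continuousOn.div S.continuous_P.continuousOn fun _ ht => (S.P_pos hF ht).ne'

theorem hasDerivAt_X (hF : S.F 1 = 0) {u : ℝ} (hu : u ∈ Ioo (0:ℝ) 1) :
    HasDerivAt S.X (S.D u / S.P u) u := by
  have hcont := S.continuousOn_D_div_P hF
  exact intervalIntegral.integral_hasDerivAt_right
    (hcont.mono (ordConnected_Ioo.uIcc_subset S.hα hu)).intervalIntegrable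
    (hcont.stronglyMeasurableAtFilter isOpen_Ioo u hu)
    (hcont.continuousAt (isOpen_Ioo.mem_nhds hu))

theorem strictMonoOn_X (hF : S.F 1 = 0) : StrictMonoOn S.X (Ioo 0 1) :=
  strictMonoOn_of_hasDerivWithinAt_pos (convex_Ioo 0 1)
    (fun _ hu => (S.hasDerivAt_X hF hu).continuousAt.continuousWithinAt)
    (fun _ hu => (S.hasDerivAt_X hF (interior_subset hu)).hasDerivWithinAt) fun u hu => by
      rw [interior_Ioo] at hu
      exact div_pos (S.hD_pos u ⟨hu.1, hu.2.le⟩) (S.P_pos hF hu)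

theorem exists_mul_sqrt_sub_le_X_sub (hF : S.F 1 = 0) : ∃ c > 0, ∀ ε ∈ Ioo (0:ℝ) 1,
    ∀ u ∈ Ioo (0:ℝ) 1, ε ≤ u → c * √u - c * √ε ≤ S.X u - S.X ε := by
  obtain ⟨m, hm, hmD⟩ := S.exists_mul_le_D
  obtain ⟨B, hB, hPB⟩ := S.exists_P_le_mul_sqrt
  refine ⟨2 * m / B, by positivity, fun ε hε u hu hεu => ?_⟩
  have hsub : Icc ε u ⊆ Ioo 0 1 := Icc_subset_Ioo hε.1 hu.2
  refine sub_le_sub_of_hasDerivAt_of_le hεu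
    (fun t ht => (Real.hasDerivAt_sqrt (hsub ht).1.ne').const_mul _)
    (fun t ht => S.hasDerivAt_X hF (hsub ht)) fun t ht => ?_
  have ht' := hsub (Ioo_subset_Icc_self ht)
  have hst := Real.sqrt_pos.2 ht'.1
  have hP := hPB t (Ioo_subset_Icc_self ht')
  have hD := hmD t (Ioo_subset_Icc_self ht')
  calc 2 * m / B * (1 / (2 * √t)) = m / (B * √t) := by field_simp
    _ ≤ S.D t / S.P t := by
        rw [div_le_div_iff₀ (by positivity) (S.P_pos hF ht')]
        nlinarith [mul_le_mul_of_nonneg_left hP hm.le,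
          mul_le_mul_of_nonneg_left hD (mul_nonneg hB.le hst.le)]

theorem bddBelow_image_X (hF : S.F 1 = 0) : BddBelow (S.X '' Ioo 0 1) := by
  obtain ⟨δ, hδ, b, hb, hbP⟩ := S.exists_mul_sqrt_le_P
  obtain ⟨K, hK, hKD⟩ := S.exists_D_le_and_abs_f_le
  refine ⟨S.X δ - 2 * K / b * √δ, ?_⟩
  rintro _ ⟨u, hu, rfl⟩
  rcases le_total u δ with huδ | hδu
  · have hsub : Icc u δ ⊆ Ioo 0 1 := Icc_subset_Ioo hu.1 hδ.2
    have hcmp := sub_le_sub_of_hasDerivAt_of_le huδ (fun t ht => S.hasDerivAt_X hF (hsub ht))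
      (fun t ht => (Real.hasDerivAt_sqrt (hsub ht).1.ne').const_mul (2 * K / b)) fun t ht => by
        have ht' := hsub (Ioo_subset_Icc_self ht)
        have hst := Real.sqrt_pos.2 ht'.1
        have hP := hbP t ⟨ht'.1.le, ht.2.le⟩
        have hD := (hKD t (Ioo_subset_Icc_self ht')).1
        calc S.D t / S.P t ≤ K / (b * √t) := by
              rw [div_le_div_iff₀ (S.P_pos hF ht') (by positivity)]
              nlinarith [mul_le_mul_of_nonneg_left hP hK.le,
                mul_le_mul_of_nonneg_right hD (mul_nonneg hb.le hst.le)]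
          _ = 2 * K / b * (1 / (2 * √t)) := by field_simp
    nlinarith [Real.sqrt_nonneg u, div_pos (mul_pos two_pos hK) hb]
  · exact (sub_le_self _ (by positivity)).trans ((S.strictMonoOn_X hF).monotoneOn hδ hu hδu)

theorem tendsto_X_nhdsLT_one (hF : S.F 1 = 0) : Tendsto S.X (𝓝[<] 1) atTop := by
  obtain ⟨m, hm, hmD⟩ := S.exists_mul_le_D
  obtain ⟨B, hB, hPB⟩ := S.exists_P_le_mul_one_sub hF
  obtain ⟨hα0, hα1⟩ := S.hα
  set c := m * S.α / B with hc
  have hlog : Tendsto (fun u : ℝ => Real.log (1 - u)) (𝓝[<] 1) atBot := by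
    refine Real.tendsto_log_nhdsGT_zero.comp
      (tendsto_nhdsWithin_of_tendsto_nhds_of_eventually_within _ ?_
        (eventually_nhdsWithin_of_forall fun u (hu : u < 1) => sub_pos.2 hu))
    have h : Continuous fun u : ℝ => 1 - u := by fun_prop
    simpa using (h.tendsto 1).mono_left nhdsWithin_le_nhds
  have hlower : ∀ u ∈ Ioo S.α 1,
      S.X S.α + c * Real.log (1 - S.α) + -(c * Real.log (1 - u)) ≤ S.X u := by
    intro u hu
    have hsub : Icc S.α u ⊆ Ioo 0 1 := Icc_subset_Ioo hα0 hu.2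
    have hcmp := sub_le_sub_of_hasDerivAt_of_le hu.1.le
      (fun t ht => ((((hasDerivAt_id' t).const_sub 1).log
        (sub_pos.2 (hsub ht).2).ne').const_mul c).neg)
      (fun t ht => S.hasDerivAt_X hF (hsub ht)) fun t ht => by
        have ht' := hsub (Ioo_subset_Icc_self ht)
        have h1t : 0 < 1 - t := sub_pos.2 ht'.2
        have hP := hPB t (Ioo_subset_Icc_self ht')
        have hD := hmD t (Ioo_subset_Icc_self ht')
        calc -(c * (-1 / (1 - t))) = m * S.α / (B * (1 - t)) := by rw [hc]; field_simp
          _ ≤ S.D t / S.P t := by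
              rw [div_le_div_iff₀ (by positivity) (S.P_pos hF ht')]
              nlinarith [mul_le_mul_of_nonneg_left hP (mul_pos hm hα0).le,
                mul_le_mul_of_nonneg_left ht.1.le hm.le, mul_nonneg hB.le h1t.le]
    simp only [Pi.neg_apply] at hcmp
    linarith
  refine tendsto_atTop_mono' _ (eventually_of_mem (Ioo_mem_nhdsLT hα1) hlower) ?_
  exact tendsto_atTop_add_const_left _ _ (tendsto_neg_atBot_atTop.comp (hlog.const_mul_atBot
    (by positivity)))

theorem x0_le_X (hF : S.F 1 = 0) {u : ℝ} (hu : u ∈ Ioo (0:ℝ) 1) : S.x0 ≤ S.X u :=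
  csInf_le (S.bddBelow_image_X hF) (mem_image_of_mem _ hu)

theorem x0_lt_X (hF : S.F 1 = 0) {u : ℝ} (hu : u ∈ Ioo (0:ℝ) 1) : S.x0 < S.X u := by
  have hu2 : u / 2 ∈ Ioo (0:ℝ) 1 := ⟨by linarith [hu.1], by linarith [hu.2]⟩
  exact (S.x0_le_X hF hu2).trans_lt (S.strictMonoOn_X hF hu2 hu (by linarith [hu.1]))

theorem surjOn_X (hF : S.F 1 = 0) : SurjOn S.X (Ioo 0 1) (Ioi S.x0) := by
  intro x hx
  obtain ⟨_, ⟨a, ha, rfl⟩, hax⟩ :=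
    exists_lt_of_csInf_lt ((nonempty_Ioo.2 zero_lt_one).image S.X) hx
  obtain ⟨b, hxb, hb⟩ := (((S.tendsto_X_nhdsLT_one hF).eventually (eventually_gt_atTop x)).and
    (Ioo_mem_nhdsLT zero_lt_one)).exists
  have hab : a ≤ b := ((S.strictMonoOn_X hF).lt_iff_lt ha hb).1 (hax.trans hxb) |>.le
  have hsub : Icc a b ⊆ Ioo 0 1 := Icc_subset_Ioo ha.1 hb.2
  obtain ⟨u, hu, rfl⟩ := intermediate_value_Icc hab
    (fun t ht => (S.hasDerivAt_X hF (hsub ht)).continuousAt.continuousWithinAt) ⟨hax.le, hxb.le⟩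
  exact ⟨u, hsub hu, rfl⟩

theorem exists_x0_add_mul_sqrt_le_X (hF : S.F 1 = 0) :
    ∃ c > 0, ∀ u ∈ Ioo (0:ℝ) 1, S.x0 + c * √u ≤ S.X u := by
  obtain ⟨c, hc, hX⟩ := S.exists_mul_sqrt_sub_le_X_sub hF
  refine ⟨c, hc, fun u hu => ?_⟩
  have hcont : Continuous fun ε => S.X u - c * √u + c * √ε := by fun_prop
  have hlim : Tendsto (fun ε => S.X u - c * √u + c * √ε) (𝓝[>] 0) (𝓝 (S.X u - c * √u)) := by
    simpa using (hcont.tendsto 0).mono_left nhdsWithin_le_nhds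
  have hle : S.x0 ≤ S.X u - c * √u := by
    refine ge_of_tendsto hlim (eventually_of_mem (Ioo_mem_nhdsGT hu.1) fun ε hε => ?_)
    have hε1 : ε ∈ Ioo (0:ℝ) 1 := ⟨hε.1, hε.2.trans hu.2⟩
    linarith [S.x0_le_X hF hε1, hX ε hε1 u hu hε.2.le]
  linarith

theorem front_of_le {x : ℝ} (hx : x ≤ S.x0) : S.front x = 0 := if_neg hx.not_gt

theorem front_mem_Ioo (hF : S.F 1 = 0) {x : ℝ} (hx : S.x0 < x) : S.front x ∈ Ioo 0 1 := by
  rw [front, if_pos hx]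
  exact Function.invFunOn_mem (S.surjOn_X hF hx)

theorem X_front (hF : S.F 1 = 0) {x : ℝ} (hx : S.x0 < x) : S.X (S.front x) = x := by
  rw [front, if_pos hx]
  exact Function.invFunOn_eq (S.surjOn_X hF hx)

theorem front_X (hF : S.F 1 = 0) {u : ℝ} (hu : u ∈ Ioo (0:ℝ) 1) : S.front (S.X u) = u :=
  (S.strictMonoOn_X hF).injOn (S.front_mem_Ioo hF (S.x0_lt_X hF hu)) hu
    (S.X_front hF (S.x0_lt_X hF hu))

theorem front_mem_Icc (hF : S.F 1 = 0) (x : ℝ) : S.front x ∈ Icc 0 1 := by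
  rcases le_or_gt x S.x0 with hx | hx
  · rw [S.front_of_le hx]
    exact left_mem_Icc.2 zero_le_one
  · exact Ioo_subset_Icc_self (S.front_mem_Ioo hF hx)

theorem monotone_front (hF : S.F 1 = 0) : Monotone S.front := by
  intro x y hxy
  rcases le_or_gt x S.x0 with hx | hx
  · rw [S.front_of_le hx]
    exact (S.front_mem_Icc hF y).1
  · have hy := hx.trans_le hxy
    rwa [← (S.strictMonoOn_X hF).le_iff_le (S.front_mem_Ioo hF hx) (S.front_mem_Ioo hF hy),
      S.X_front hF hx, S.X_front hF hy]

theorem image_front_Ioi (hF : S.F 1 = 0) : S.front '' Ioi S.x0 = Ioo 0 1 := by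
  refine Subset.antisymm ?_ fun u hu => ⟨S.X u, S.x0_lt_X hF hu, S.front_X hF hu⟩
  rintro _ ⟨x, hx, rfl⟩
  exact S.front_mem_Ioo hF hx

theorem continuousAt_front (hF : S.F 1 = 0) {x : ℝ} (hx : S.x0 < x) :
    ContinuousAt S.front x :=
  continuousAt_of_monotoneOn_of_image_mem_nhds ((S.monotone_front hF).monotoneOn _)
    (Ioi_mem_nhds hx) (by
      rw [S.image_front_Ioi hF]
      exact isOpen_Ioo.mem_nhds (S.front_mem_Ioo hF hx))

theorem exists_front_le_mul_sq (hF : S.F 1 = 0) :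
    ∃ C, ∀ x ≤ S.x0, ∀ y, S.front y ≤ C * (y - x) ^ 2 := by
  obtain ⟨c, hc, hX⟩ := S.exists_x0_add_mul_sqrt_le_X hF
  refine ⟨(c ^ 2)⁻¹, fun x hx y => ?_⟩
  rcases le_or_gt y S.x0 with hy | hy
  · rw [S.front_of_le hy]
    positivity
  · have hmem := S.front_mem_Ioo hF hy
    have h := hX _ hmem
    rw [S.X_front hF hy] at h
    calc S.front y = (c ^ 2)⁻¹ * (c * √(S.front y)) ^ 2 := by
          rw [mul_pow, Real.sq_sqrt hmem.1.le]
          field_simp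
      _ ≤ (c ^ 2)⁻¹ * (y - x) ^ 2 := by
          gcongr
          linarith

theorem D_mul_phaseSlope {u : ℝ} (hu : u ∈ Icc (0:ℝ) 1) : S.D u * S.phaseSlope u = S.P u := by
  rcases hu.1.eq_or_lt with rfl | hu0
  · rw [S.phaseSlope_zero, S.P_zero, mul_zero]
  · exact mul_div_cancel₀ _ (S.hD_pos u ⟨hu0, hu.2⟩).ne'

theorem continuousOn_phaseSlope : ContinuousOn S.phaseSlope (Icc 0 1) := by
  intro u hu
  rcases hu.1.eq_or_lt with rfl | hu0
  · obtain ⟨m, hm, hmD⟩ := S.exists_mul_le_D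
    obtain ⟨B, hB, hPB⟩ := S.exists_P_le_mul_sqrt
    have hbound : ∀ v ∈ Icc (0:ℝ) 1, ‖S.phaseSlope v‖ ≤ B / m * √v := by
      intro v hv
      rcases hv.1.eq_or_lt with rfl | hv0
      · rw [S.phaseSlope_zero, norm_zero]
        positivity
      · have hD := S.hD_pos v ⟨hv0, hv.2⟩
        rw [Real.norm_eq_abs, phaseSlope, abs_of_nonneg (div_nonneg (S.P_nonneg v) hD.le),
          div_le_iff₀ hD]
        calc S.P v ≤ B * (v * √v) := hPB v hv
          _ = B / m * √v * (m * v) := by field_simp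
          _ ≤ B / m * √v * S.D v := by gcongr; exact hmD v hv
    have hlim : Tendsto (fun v => B / m * √v) (𝓝[Icc 0 1] 0) (𝓝 0) := by
      have hcont : Continuous fun v : ℝ => B / m * √v := by fun_prop
      simpa using (hcont.tendsto 0).mono_left nhdsWithin_le_nhds
    rw [ContinuousWithinAt, S.phaseSlope_zero]
    exact squeeze_zero_norm' (eventually_nhdsWithin_of_forall hbound) hlim
  · exact (S.continuous_P.continuousAt.div S.continuous_D.continuousAt
      (S.hD_pos u ⟨hu0, hu.2⟩).ne').continuousWithinAt

theorem hasDerivAt_front (hF : S.F 1 = 0) (x : ℝ) :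
    HasDerivAt S.front (S.phaseSlope (S.front x)) x := by
  rcases le_or_gt x S.x0 with hx | hx
  · obtain ⟨C, hC⟩ := S.exists_front_le_mul_sq hF
    rw [S.front_of_le hx, S.phaseSlope_zero]
    refine hasDerivAt_zero_of_abs_sub_le_sq (C := C) fun y => ?_
    rw [S.front_of_le hx, sub_zero, abs_of_nonneg (S.front_mem_Icc hF y).1]
    exact hC x hx y
  · have hmem := S.front_mem_Ioo hF hx
    have h := (S.hasDerivAt_X hF hmem).of_local_left_inverse (S.continuousAt_front hF hx)
      (div_pos (S.hD_pos _ ⟨hmem.1, hmem.2.le⟩) (S.P_pos hF hmem)).ne'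
      (eventually_of_mem (Ioi_mem_nhds hx) fun y hy => S.X_front hF hy)
    rwa [inv_div] at h

theorem contDiff_front (hF : S.F 1 = 0) : ContDiff ℝ 1 S.front := by
  have hd := S.hasDerivAt_front hF
  have hcont : Continuous S.front := continuous_iff_continuousAt.2 fun x => (hd x).continuousAt
  rw [contDiff_one_iff_deriv, show deriv S.front = S.phaseSlope ∘ S.front from
    funext fun x => (hd x).deriv]
  exact ⟨fun x => (hd x).differentiableAt,
    S.continuousOn_phaseSlope.comp_continuous hcont (S.front_mem_Icc hF)⟩

theorem flux_front (hF : S.F 1 = 0) :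
    (fun y => S.D (S.front y) * deriv S.front y) = fun y => S.P (S.front y) :=
  funext fun y => by
    rw [(S.hasDerivAt_front hF y).deriv, S.D_mul_phaseSlope (S.front_mem_Icc hF y)]

theorem hasDerivAt_P_front (hF : S.F 1 = 0) (x : ℝ) :
    HasDerivAt (fun y => S.P (S.front y)) (-S.f (S.front x)) x := by
  rcases le_or_gt x S.x0 with hx | hx
  · obtain ⟨C, hC⟩ := S.exists_front_le_mul_sq hF
    obtain ⟨B, hB, hPB⟩ := S.exists_P_le_mul_sqrt
    rw [S.front_of_le hx, S.hf0, neg_zero]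
    refine hasDerivAt_zero_of_abs_sub_le_sq (C := B * C) fun y => ?_
    have hmem := S.front_mem_Icc hF y
    rw [S.front_of_le hx, S.P_zero, sub_zero, abs_of_nonneg (S.P_nonneg _), mul_assoc]
    calc S.P (S.front y) ≤ B * (S.front y * √(S.front y)) := hPB _ hmem
      _ ≤ B * S.front y := by
          gcongr
          exact mul_le_of_le_one_right hmem.1 (Real.sqrt_le_one.2 hmem.2)
      _ ≤ B * (C * (y - x) ^ 2) := by gcongr; exact hC x hx y
  · have hmem := S.front_mem_Ioo hF hx
    have h : HasDerivAt (fun y => S.P (S.front y)) _ x :=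
      (S.hasDerivAt_P hF hmem).comp x (S.hasDerivAt_front hF x)
    convert h using 1
    rw [phaseSlope]
    field_simp [(S.P_pos hF hmem).ne', (S.hD_pos _ ⟨hmem.1, hmem.2.le⟩).ne']

theorem isStationarySolution_front (hF : S.F 1 = 0) :
    IsStationarySolution S.D S.f S.front := by
  refine ⟨S.contDiff_front hF, S.front_mem_Icc hF, ?_, fun x => ?_⟩
  · rw [S.flux_front hF]
    exact fun x => (S.hasDerivAt_P_front hF x).differentiableAt
  · rw [S.flux_front hF, (S.hasDerivAt_P_front hF x).deriv, neg_add_cancel]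

theorem tendsto_front_atBot : Tendsto S.front atBot (𝓝 0) :=
  tendsto_const_nhds.congr' ((eventually_le_atBot S.x0).mono fun _ hx => (S.front_of_le hx).symm)

theorem tendsto_front_atTop (hF : S.F 1 = 0) : Tendsto S.front atTop (𝓝 1) := by
  refine tendsto_atTop_isLUB (S.monotone_front hF)
    ((isLUB_Ioo zero_lt_one).of_subset_of_superset (isLUB_Icc zero_le_one) ?_ ?_)
  · exact fun u hu => ⟨S.X u, S.front_X hF hu⟩
  · rintro _ ⟨x, rfl⟩
    exact S.front_mem_Icc hF x

end NagumoSetup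

/-- If `∫₀¹ D f = 0` then there exist two stationary (`c = 0`) monotone fronts:
a nondecreasing one from `0` to `1` and a nonincreasing one from `1` to `0`. -/
theorem statement1 (S : NagumoSetup)
    (hDf : (∫ u in (0:ℝ)..1, S.D u * S.f u) = 0) :
    (∃ φ : ℝ → ℝ, ContDiff ℝ 1 φ ∧ (∀ x, φ x ∈ Set.Icc (0:ℝ) 1) ∧
      Differentiable ℝ (fun x => S.D (φ x) * deriv φ x) ∧
      (∀ x, deriv (fun y => S.D (φ y) * deriv φ y) x + S.f (φ x) = 0) ∧
      Monotone φ ∧ Tendsto φ atBot (𝓝 0) ∧ Tendsto φ atTop (𝓝 1)) ∧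
    (∃ φ : ℝ → ℝ, ContDiff ℝ 1 φ ∧ (∀ x, φ x ∈ Set.Icc (0:ℝ) 1) ∧
      Differentiable ℝ (fun x => S.D (φ x) * deriv φ x) ∧
      (∀ x, deriv (fun y => S.D (φ y) * deriv φ y) x + S.f (φ x) = 0) ∧
      Antitone φ ∧ Tendsto φ atBot (𝓝 1) ∧ Tendsto φ atTop (𝓝 0)) := by
  obtain ⟨hC1, hmem, hflux, heq⟩ := S.isStationarySolution_front hDf
  obtain ⟨hC1', hmem', hflux', heq'⟩ := (S.isStationarySolution_front hDf).comp_neg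
  have hmono := S.monotone_front hDf
  exact ⟨⟨S.front, hC1, hmem, hflux, heq, hmono, S.tendsto_front_atBot,
      S.tendsto_front_atTop hDf⟩,
    ⟨fun x => S.front (-x), hC1', hmem', hflux', heq', fun x y hxy => hmono (neg_le_neg hxy),
      (S.tendsto_front_atTop hDf).comp tendsto_neg_atBot_atTop,
      S.tendsto_front_atBot.comp tendsto_neg_atTop_atBot⟩⟩
end
end

section
/- Suppose c < 0. If ∫_0^1 D(u)f(u) du < 0, then there is no monotone C¹ profile φ with (D(φ)φ')' + cφ' + f(φ) = 0 on ℝ, 0 ≤ φ ≤ 1, lim_{ξ→−∞} φ(ξ) = 0, lim_{ξ→+∞} φ(ξ) = 1, D(φ)φ' → 0 at ±∞ and ∫_ℝ D(φ)φ'² dξ finite; if ∫_0^1 D(u)f(u) du > 0, then there is no such monotone profile with lim_{ξ→−∞} φ(ξ) = 1 and lim_{ξ→+∞} φ(ξ) = 0. -/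
/-!
Multiplying the profile equation by the flux `g = D(φ)φ'` and writing `G(u) = ∫₀ᵘ D f`, the energy
`g²/2 + G(φ)` has derivative `-c D(φ)φ'²`. Integrating over `ℝ` gives
`-c ∫ D(φ)φ'² = G(φ(+∞)) - G(φ(-∞))`. For `c < 0` the left side is nonnegative, whereas the right
side is `∫₀¹ D f < 0` for a front from `0` to `1` and `-∫₀¹ D f < 0` for a front from `1` to `0`.
-/

open MeasureTheory Filter Topology Asymptotics

noncomputable section

namespace NagumoSetup

variable (S : NagumoSetup)

lemma D_nonneg {u : ℝ} (hu : u ∈ Set.Icc (0 : ℝ) 1) : 0 ≤ S.D u := by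
  rcases hu.1.eq_or_lt with rfl | hpos
  · exact S.hD0.ge
  · exact (S.hD_pos u ⟨hpos, hu.2⟩).le

lemma hasDerivAt_integral_D_mul_f (u : ℝ) :
    HasDerivAt (fun v => ∫ s in (0 : ℝ)..v, S.D s * S.f s) (S.D u * S.f u) u :=
  ((S.hD_C2.continuous.mul S.hf_C2.continuous).integral_hasStrictDerivAt 0 u).hasDerivAt

end NagumoSetup

namespace TWProfile

variable {S : NagumoSetup} {φ : ℝ → ℝ} {c : ℝ}

lemma integral_D_mul_deriv_sq_nonneg (h : TWProfile S φ c) :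
    0 ≤ ∫ x, S.D (φ x) * deriv φ x ^ 2 :=
  integral_nonneg fun x => mul_nonneg (S.D_nonneg (h.hrange x)) (sq_nonneg _)

lemma hasDerivAt_flux (h : TWProfile S φ c) (x : ℝ) :
    HasDerivAt (fun y => S.D (φ y) * deriv φ y) (-(c * deriv φ x + S.f (φ x))) x :=
  (h.hflux x).hasDerivAt.congr_deriv (by linarith [h.hode x])

lemma hasDerivAt_energy (h : TWProfile S φ c) (x : ℝ) :
    HasDerivAt
      (fun y => (S.D (φ y) * deriv φ y) ^ 2 / 2 + ∫ s in (0 : ℝ)..φ y, S.D s * S.f s)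
      (-c * (S.D (φ x) * deriv φ x ^ 2)) x := by
  have hφ : HasDerivAt φ (deriv φ x) x :=
    (h.hC1.differentiable one_ne_zero x).hasDerivAt
  refine (((h.hasDerivAt_flux x).pow 2).div_const 2
    |>.add ((S.hasDerivAt_integral_D_mul_f (φ x)).comp x hφ)).congr_deriv ?_
  push_cast
  ring

theorem neg_mul_integral_D_mul_deriv_sq_eq (h : TWProfile S φ c) {a b : ℝ}
    (hbot : Tendsto φ atBot (𝓝 a)) (htop : Tendsto φ atTop (𝓝 b)) :
    -c * ∫ x, S.D (φ x) * deriv φ x ^ 2 =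
      (∫ u in (0 : ℝ)..b, S.D u * S.f u) - ∫ u in (0 : ℝ)..a, S.D u * S.f u := by
  have hG : Continuous fun v => ∫ s in (0 : ℝ)..v, S.D s * S.f s :=
    continuous_iff_continuousAt.2 fun u => (S.hasDerivAt_integral_D_mul_f u).continuousAt
  have hsq : ∀ {l : Filter ℝ}, Tendsto (fun x => S.D (φ x) * deriv φ x) l (𝓝 0) →
      Tendsto (fun x => (S.D (φ x) * deriv φ x) ^ 2 / 2) l (𝓝 0) := fun hl => by
    simpa using (hl.pow 2).div_const 2
  have hE_bot := (hsq h.hflux_bot).add ((hG.tendsto a).comp hbot)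
  have hE_top := (hsq h.hflux_top).add ((hG.tendsto b).comp htop)
  rw [zero_add] at hE_bot hE_top
  rw [← integral_const_mul]
  exact integral_of_hasDerivAt_of_tendsto h.hasDerivAt_energy (h.hint.const_mul (-c))
    hE_bot hE_top

end TWProfile

/-- Nonexistence of monotone fronts with negative speed: if `c < 0` and `∫₀¹ Df < 0`
there is no monotone front from `0` to `1`; if `c < 0` and `∫₀¹ Df > 0` there is no
monotone front from `1` to `0`. -/
theorem statement2 (S : NagumoSetup) (c : ℝ) (hc : c < 0) :
    ((∫ u in (0:ℝ)..1, S.D u * S.f u) < 0 →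
      ¬ ∃ φ : ℝ → ℝ, TWProfile S φ c ∧ Monotone φ ∧
        Tendsto φ atBot (𝓝 0) ∧ Tendsto φ atTop (𝓝 1)) ∧
    ((0 : ℝ) < (∫ u in (0:ℝ)..1, S.D u * S.f u) →
      ¬ ∃ φ : ℝ → ℝ, TWProfile S φ c ∧ Antitone φ ∧
        Tendsto φ atBot (𝓝 1) ∧ Tendsto φ atTop (𝓝 0)) := by
  constructor
  · rintro hneg ⟨φ, h, -, hbot, htop⟩
    have henergy := h.neg_mul_integral_D_mul_deriv_sq_eq hbot htop
    rw [intervalIntegral.integral_same] at henergy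
    nlinarith [h.integral_D_mul_deriv_sq_nonneg]
  · rintro hpos ⟨φ, h, -, hbot, htop⟩
    have henergy := h.neg_mul_integral_D_mul_deriv_sq_eq hbot htop
    rw [intervalIntegral.integral_same] at henergy
    nlinarith [h.integral_D_mul_deriv_sq_nonneg]
end
end

section
/- Assume ∫_0^1 D(u)f(u) du = 0. Then there exists a unique ω₀ ∈ ℝ such that the stationary Nagumo front φ (the nonincreasing C¹ solution of (D(φ)φ_x)_x + f(φ) = 0 on ℝ with lim_{x→−∞} φ(x) = 1 and lim_{x→+∞} φ(x) = 0) satisfies φ(x) ≡ 0 for all x ∈ [ω₀, ∞), φ_x(x) < 0 for all x ∈ (−∞, ω₀), and 0 ≤ φ(x) < 1 for all x ∈ ℝ. -/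
open MeasureTheory Filter Topology Asymptotics

noncomputable section

/-- The stationary (speed `c = 0`) Nagumo front: a nonincreasing `C¹` solution of
`(D(φ)φ_x)_x + f(φ) = 0` on `ℝ` with `φ(-∞) = 1` and `φ(+∞) = 0`. -/
structure StatFront (S : NagumoSetup) (φ : ℝ → ℝ) : Prop where
  hC1 : ContDiff ℝ 1 φ
  hflux : Differentiable ℝ fun x => S.D (φ x) * deriv φ x
  hode : ∀ x, deriv (fun y => S.D (φ y) * deriv φ y) x + S.f (φ x) = 0
  hmono : Antitone φ
  hbot : Tendsto φ atBot (𝓝 1)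
  htop : Tendsto φ atTop (𝓝 0)

/-!
Write `g = D(φ) φ'` for the flux and `F(u) = ∫₀ᵘ D f` for the potential. Along the front the
energy `g²/2 + F(φ)` is constant, and it is nonnegative because `F(φ) → F(0) = 0` at `+∞`.
The balance condition `F(1) = 0` makes `F < 0` on `(0,1)`, so `φ' < 0` wherever `0 < φ < 1`.
Near `0` we have `-F(u) ≳ u³` while `D(u) ≲ u`, hence `φ' ≤ -κ √φ` and `φ` reaches `0` in
finite time. If `φ` touched `1`, it would do so with `φ' = 0`, so the energy would vanish;
then `|φ'| ≤ K (1 - φ)` near `1`, and Grönwall's inequality would keep `φ ≡ 1` afterwards,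
contradicting `φ → 0`.
-/

theorem exists_eq_zero_of_deriv_le_neg_mul_sqrt {ψ : ℝ → ℝ} {κ : ℝ}
    (hψ : Differentiable ℝ ψ) (hnonneg : ∀ x, 0 ≤ ψ x) (hκ : 0 < κ)
    (hderiv : ∀ᶠ x in atTop, 0 < ψ x → deriv ψ x ≤ -(κ * √(ψ x))) :
    ∃ x, ψ x = 0 := by
  by_contra! hne
  have hpos : ∀ x, 0 < ψ x := fun x => (hnonneg x).lt_of_ne' (hne x)
  obtain ⟨b, hb⟩ := eventually_atTop.mp hderiv
  have hsqrt : ∀ x, HasDerivAt (fun y => √(ψ y)) (deriv ψ x / (2 * √(ψ x))) x :=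
    fun x => (hψ x).hasDerivAt.sqrt (hpos x).ne'
  have hslope : ∀ x ∈ interior (Set.Ici b), deriv (fun y => √(ψ y)) x ≤ -(κ / 2) := by
    intro x hx
    rw [interior_Ici] at hx
    have hsx := Real.sqrt_pos.mpr (hpos x)
    rw [(hsqrt x).deriv, div_le_iff₀ (by positivity)]
    nlinarith [hb x hx.le (hpos x)]
  set X := b + 2 * (√(ψ b) + 1) / κ with hX
  have hbX : b ≤ X := le_add_of_nonneg_right (by positivity)
  have hdecay := (convex_Ici b).image_sub_le_mul_sub_of_deriv_le
    (fun x _ => (hsqrt x).continuousAt.continuousWithinAt)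
    (fun x _ => (hsqrt x).differentiableAt.differentiableWithinAt) hslope
    b Set.self_mem_Ici X hbX hbX
  have hκX : κ / 2 * (X - b) = √(ψ b) + 1 := by rw [hX]; field_simp; ring
  nlinarith [Real.sqrt_nonneg (ψ X)]

theorem eqOn_zero_of_abs_deriv_le {ψ ψ' : ℝ → ℝ} {a b K : ℝ}
    (hψ : ∀ x, HasDerivAt ψ (ψ' x) x) (ha : ψ a = 0)
    (hbound : ∀ x ∈ Set.Ico a b, |ψ' x| ≤ K * |ψ x|) :
    Set.EqOn ψ 0 (Set.Icc a b) := by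
  intro x hx
  have := norm_le_gronwallBound_of_norm_deriv_right_le
    (fun y _ => (hψ y).continuousAt.continuousWithinAt)
    (fun y _ => (hψ y).hasDerivWithinAt) (by simp [ha] : ‖ψ a‖ ≤ 0)
    (ε := 0) (by simpa using hbound) x hx
  simpa [gronwallBound_ε0_δ0] using this

theorem exists_forall_eq_zero_iff_le {φ : ℝ → ℝ} (hc : Continuous φ) (hanti : Antitone φ)
    (hnonneg : ∀ x, 0 ≤ φ x) (hzero : ∃ x, φ x = 0) (hne : ∃ x, φ x ≠ 0) :
    ∃ ω, ∀ x, φ x = 0 ↔ ω ≤ x := by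
  obtain ⟨x₁, hx₁⟩ := hne
  have hbdd : BddBelow {x | φ x = 0} := ⟨x₁, fun y hy => by
    by_contra! hyx
    exact hx₁ (le_antisymm (hy ▸ hanti hyx.le) (hnonneg x₁))⟩
  have hmem : φ (sInf {x | φ x = 0}) = 0 :=
    (isClosed_eq hc continuous_const).csInf_mem hzero hbdd
  refine ⟨sInf {x | φ x = 0}, fun x => ⟨fun hx => csInf_le hbdd hx, fun hx => ?_⟩⟩
  exact le_antisymm (hmem ▸ hanti hx) (hnonneg x)

theorem tendsto_slope_zero_nhdsGT {g : ℝ → ℝ} (hg : Differentiable ℝ g) :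
    Tendsto (slope g 0) (𝓝[>] 0) (𝓝 (deriv g 0)) :=
  (hasDerivAt_iff_tendsto_slope.mp (hg 0).hasDerivAt).mono_left (nhdsGT_le_nhdsNE 0)

namespace NagumoSetup

variable (S : NagumoSetup)

def potential (u : ℝ) : ℝ := ∫ t in (0 : ℝ)..u, S.D t * S.f t

theorem continuous_D_mul_f : Continuous fun u => S.D u * S.f u :=
  S.hD_C2.continuous.mul S.hf_C2.continuous

theorem hasDerivAt_potential (u : ℝ) : HasDerivAt S.potential (S.D u * S.f u) u :=
  intervalIntegral.integral_hasDerivAt_right (S.continuous_D_mul_f.intervalIntegrable 0 u)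
    (S.continuous_D_mul_f.stronglyMeasurableAtFilter _ _) S.continuous_D_mul_f.continuousAt

theorem continuous_potential : Continuous S.potential :=
  continuous_iff_continuousAt.mpr fun u => (S.hasDerivAt_potential u).continuousAt

theorem potential_zero : S.potential 0 = 0 := intervalIntegral.integral_same

variable {S}

theorem neg_potential_eq_integral (hDf : ∫ u in (0 : ℝ)..1, S.D u * S.f u = 0) (u : ℝ) :
    -S.potential u = ∫ t in u..1, S.D t * S.f t := by
  rw [← intervalIntegral.integral_interval_sub_left (S.continuous_D_mul_f.intervalIntegrable _ _)
    (S.continuous_D_mul_f.intervalIntegrable _ _), hDf, potential, zero_sub]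

theorem potential_neg (hDf : ∫ u in (0 : ℝ)..1, S.D u * S.f u = 0) {u : ℝ}
    (hu : u ∈ Set.Ioo 0 1) : S.potential u < 0 := by
  have hα0 := S.hα.1
  rcases le_or_gt u S.α with huα | huα
  · have hint : 0 < ∫ t in (0 : ℝ)..u, -(S.D t * S.f t) := by
      refine intervalIntegral.intervalIntegral_pos_of_pos_on
        (S.continuous_D_mul_f.neg.intervalIntegrable _ _) (fun t ht => ?_) hu.1
      exact neg_pos.mpr (mul_neg_of_pos_of_neg (S.hD_pos t ⟨ht.1, by linarith [ht.2, hu.2]⟩)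
        (S.hf_neg t ⟨ht.1, ht.2.trans_le huα⟩))
    rw [intervalIntegral.integral_neg] at hint
    exact neg_pos.mp hint
  · have hint : 0 < ∫ t in u..1, S.D t * S.f t := by
      refine intervalIntegral.intervalIntegral_pos_of_pos_on
        (S.continuous_D_mul_f.intervalIntegrable _ _) (fun t ht => ?_) hu.2
      exact mul_pos (S.hD_pos t ⟨by linarith [ht.1], ht.2.le⟩)
        (S.hf_pos t ⟨huα.trans ht.1, ht.2⟩)
    linarith [neg_potential_eq_integral hDf u]

theorem exists_mul_D_sq_le_neg_potential_nhdsGT_zero :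
    ∃ c > 0, ∀ᶠ u in 𝓝[>] 0, c * u * S.D u ^ 2 ≤ -(2 * S.potential u) := by
  set a := deriv S.D 0
  set b := deriv S.f 0
  have ha : 0 < a := S.hD'_pos 0 ⟨le_rfl, zero_le_one⟩
  have hb : 0 < -b := neg_pos.mpr S.hf'0
  have hslopeD := tendsto_slope_zero_nhdsGT (S.hD_C2.differentiable two_ne_zero)
  have hslopef := tendsto_slope_zero_nhdsGT (S.hf_C2.differentiable two_ne_zero)
  have hev : ∀ᶠ t in 𝓝[>] (0 : ℝ), slope S.D 0 t < 2 * a ∧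
      slope S.D 0 t * slope S.f 0 t < a * b / 2 ∧ t < 1 :=
    (hslopeD.eventually_lt_const (by linarith)).and
      (((hslopeD.mul hslopef).eventually_lt_const (by nlinarith)).and
        (eventually_nhdsWithin_of_eventually_nhds (Iio_mem_nhds one_pos)))
  obtain ⟨δ, hδ, hδsub⟩ := mem_nhdsGT_iff_exists_Ioo_subset.mp hev
  have hc : 0 < -b / (12 * a) := div_pos hb (by linarith)
  refine ⟨-b / (12 * a), hc, mem_of_superset (Ioo_mem_nhdsGT hδ) fun u hu => ?_⟩
  have hpt : ∀ t ∈ Set.Ioo 0 δ, S.D t < 2 * a * t ∧ S.D t * S.f t < a * b / 2 * t ^ 2 := by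
    intro t ht
    obtain ⟨h1, h2, -⟩ := hδsub ht
    simp only [slope_def_field, S.hD0, S.hf0, sub_zero] at h1 h2
    rw [div_mul_div_comm, ← sq, div_lt_iff₀ (pow_pos ht.1 2)] at h2
    exact ⟨(div_lt_iff₀ ht.1).mp h1, h2⟩
  have hint : S.potential u ≤ ∫ t in (0 : ℝ)..u, a * b / 2 * t ^ 2 :=
    intervalIntegral.integral_mono_on_of_le_Ioo hu.1.le
      (S.continuous_D_mul_f.intervalIntegrable _ _)
      ((by fun_prop : Continuous _).intervalIntegrable _ _)
      fun t ht => (hpt t ⟨ht.1, ht.2.trans hu.2⟩).2.le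
  rw [intervalIntegral.integral_const_mul, integral_pow] at hint
  norm_num at hint
  have hDu : 0 < S.D u := S.hD_pos u ⟨hu.1, (hδsub hu).2.2.le⟩
  have hD2 : S.D u ^ 2 ≤ (2 * a * u) ^ 2 := pow_le_pow_left₀ hDu.le (hpt u hu).1.le 2
  calc -b / (12 * a) * u * S.D u ^ 2 ≤ -b / (12 * a) * u * (2 * a * u) ^ 2 := by
        gcongr
        exact mul_nonneg hc.le hu.1.le
    _ = -(2 * (a * b / 2 * (u ^ 3 / 3))) := by field_simp; ring
    _ ≤ -(2 * S.potential u) := by linarith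

theorem exists_neg_potential_le_mul_D_sq_nhdsLT_one
    (hDf : ∫ u in (0 : ℝ)..1, S.D u * S.f u = 0) :
    ∃ C, ∀ᶠ u in 𝓝[<] 1, -(2 * S.potential u) ≤ C * ((1 - u) * S.D u) ^ 2 := by
  set p := -(S.D 1 * deriv S.f 1) with hp_def
  have hD1 : 0 < S.D 1 := S.hD_pos 1 ⟨one_pos, le_rfl⟩
  have hp : 0 < p := neg_pos.mpr (mul_neg_of_pos_of_neg hD1 S.hf'1)
  have hderiv : HasDerivAt (fun u => S.D u * S.f u) (-p) 1 :=
    (((S.hD_C2.differentiable two_ne_zero) 1).hasDerivAt.fun_mul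
      ((S.hf_C2.differentiable two_ne_zero) 1).hasDerivAt).congr_deriv
      (by rw [hp_def, S.hf1]; ring)
  have hslope := (hasDerivAt_iff_tendsto_slope.mp hderiv).mono_left (nhdsLT_le_nhdsNE 1)
  have hev : ∀ᶠ t in 𝓝[<] (1 : ℝ),
      -(2 * p) < slope (fun u => S.D u * S.f u) 1 t ∧ S.D 1 / 2 < S.D t :=
    (hslope.eventually_const_lt (by linarith)).and (eventually_nhdsWithin_of_eventually_nhds
      ((S.hD_C2.continuous.tendsto 1).eventually_const_lt (half_lt_self hD1)))
  obtain ⟨l, hl, hlsub⟩ := mem_nhdsLT_iff_exists_Ioo_subset.mp hev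
  refine ⟨8 * p / S.D 1 ^ 2, mem_of_superset (Ioo_mem_nhdsLT hl) fun u hu => ?_⟩
  have hpt : ∀ t ∈ Set.Ioo l 1, S.D t * S.f t < 2 * p * (1 - t) := by
    intro t ht
    have h1 := (hlsub ht).1
    simp only [slope_def_field, S.hf1, mul_zero, sub_zero] at h1
    rw [lt_div_iff_of_neg (by linarith [ht.2])] at h1
    linarith
  have hint : ∫ t in u..1, S.D t * S.f t ≤ ∫ t in u..1, 2 * p * (1 - t) :=
    intervalIntegral.integral_mono_on_of_le_Ioo hu.2.le
      (S.continuous_D_mul_f.intervalIntegrable _ _)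
      ((by fun_prop : Continuous _).intervalIntegrable _ _)
      fun t ht => (hpt t ⟨hu.1.trans ht.1, ht.2⟩).le
  have hlin : ∫ t in u..1, 2 * p * (1 - t) = p * (1 - u) ^ 2 := by
    rw [intervalIntegral.integral_const_mul, intervalIntegral.integral_comp_sub_left (fun x => x)]
    simp
    ring
  rw [← neg_potential_eq_integral hDf, hlin] at hint
  have hDu := (hlsub hu).2
  calc -(2 * S.potential u) ≤ 2 * p * (1 - u) ^ 2 := by linarith
    _ = 8 * p / S.D 1 ^ 2 * ((1 - u) * (S.D 1 / 2)) ^ 2 := by field_simp; ring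
    _ ≤ 8 * p / S.D 1 ^ 2 * ((1 - u) * S.D u) ^ 2 := by
        have h1u : 0 ≤ 1 - u := by linarith [hu.2]
        gcongr

end NagumoSetup

namespace StatFront

variable {S : NagumoSetup} {φ : ℝ → ℝ}

theorem energy_eq (hφ : StatFront S φ) (x y : ℝ) :
    (S.D (φ x) * deriv φ x) ^ 2 / 2 + S.potential (φ x) =
      (S.D (φ y) * deriv φ y) ^ 2 / 2 + S.potential (φ y) := by
  have hφd : Differentiable ℝ φ := hφ.hC1.differentiable one_ne_zero
  have hE : ∀ z, HasDerivAt
      (fun z => (S.D (φ z) * deriv φ z) ^ 2 / 2 + S.potential (φ z)) 0 z := by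
    intro z
    have hflux : HasDerivAt (fun y => S.D (φ y) * deriv φ y) (-S.f (φ z)) z :=
      (hφ.hflux z).hasDerivAt.congr_deriv (eq_neg_of_add_eq_zero_left (hφ.hode z))
    refine (((hflux.pow 2).div_const 2).add
      ((S.hasDerivAt_potential (φ z)).comp z (hφd z).hasDerivAt)).congr_deriv ?_
    push_cast
    ring
  exact is_const_of_deriv_eq_zero (fun z => (hE z).differentiableAt) (fun z => (hE z).deriv) x y

theorem neg_two_mul_potential_le_sq (hφ : StatFront S φ) (x : ℝ) :
    -(2 * S.potential (φ x)) ≤ (S.D (φ x) * deriv φ x) ^ 2 := by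
  have hlim : Tendsto (S.potential ∘ φ) atTop (𝓝 0) :=
    (S.continuous_potential.tendsto' 0 0 S.potential_zero).comp hφ.htop
  have hE : 0 ≤ (S.D (φ x) * deriv φ x) ^ 2 / 2 + S.potential (φ x) :=
    le_of_tendsto' hlim fun y => by
      rw [Function.comp_apply, hφ.energy_eq x y]
      linarith [sq_nonneg (S.D (φ y) * deriv φ y)]
  linarith

theorem deriv_neg (hφ : StatFront S φ) (hDf : ∫ u in (0 : ℝ)..1, S.D u * S.f u = 0)
    {x : ℝ} (hx : φ x ∈ Set.Ioo 0 1) : deriv φ x < 0 := by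
  have hF := NagumoSetup.potential_neg hDf hx
  have hsq := hφ.neg_two_mul_potential_le_sq x
  refine hφ.hmono.deriv_nonpos.lt_of_ne fun h => ?_
  rw [h, mul_zero] at hsq
  linarith [hsq]

theorem exists_eq_zero (hφ : StatFront S φ) (hrange : ∀ x, 0 ≤ φ x ∧ φ x ≤ 1) :
    ∃ x, φ x = 0 := by
  obtain ⟨c, hc, hcF⟩ := NagumoSetup.exists_mul_D_sq_le_neg_potential_nhdsGT_zero (S := S)
  refine exists_eq_zero_of_deriv_le_neg_mul_sqrt (hφ.hC1.differentiable one_ne_zero)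
    (fun x => (hrange x).1) (Real.sqrt_pos.mpr hc) ?_
  filter_upwards [hφ.htop.eventually (eventually_nhdsWithin_iff.mp hcF)] with x hx hpos
  have hD : 0 < S.D (φ x) := S.hD_pos _ ⟨hpos, (hrange x).2⟩
  have h1 : c * φ x * S.D (φ x) ^ 2 ≤ deriv φ x ^ 2 * S.D (φ x) ^ 2 := by
    linarith [hx hpos, hφ.neg_two_mul_potential_le_sq x]
  have h2 := Real.sqrt_le_sqrt (le_of_mul_le_mul_right h1 (pow_pos hD 2))
  rw [Real.sqrt_mul hc.le, Real.sqrt_sq_eq_abs, abs_of_nonpos hφ.hmono.deriv_nonpos] at h2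
  linarith

theorem deriv_eq_zero_of_eq_one (hrange : ∀ x, 0 ≤ φ x ∧ φ x ≤ 1) {x : ℝ} (hx : φ x = 1) :
    deriv φ x = 0 :=
  IsLocalMax.deriv_eq_zero (Eventually.of_forall fun y => hx ▸ (hrange y).2)

theorem sq_eq_neg_two_mul_potential_of_eq_one (hφ : StatFront S φ)
    (hDf : ∫ u in (0 : ℝ)..1, S.D u * S.f u = 0) (hrange : ∀ x, 0 ≤ φ x ∧ φ x ≤ 1)
    {x₀ : ℝ} (hx₀ : φ x₀ = 1) (x : ℝ) :
    (S.D (φ x) * deriv φ x) ^ 2 = -(2 * S.potential (φ x)) := by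
  have hF1 : S.potential 1 = 0 := hDf
  have := hφ.energy_eq x x₀
  rw [deriv_eq_zero_of_eq_one hrange hx₀, hx₀, hF1] at this
  linarith

theorem lt_one (hφ : StatFront S φ) (hDf : ∫ u in (0 : ℝ)..1, S.D u * S.f u = 0)
    (hrange : ∀ x, 0 ≤ φ x ∧ φ x ≤ 1) (x₀ : ℝ) : φ x₀ < 1 := by
  by_contra! h
  have hx₀ : φ x₀ = 1 := le_antisymm (hrange x₀).2 h
  obtain ⟨C, hC⟩ := NagumoSetup.exists_neg_potential_le_mul_D_sq_nhdsLT_one hDf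
  obtain ⟨l, hl, hlsub⟩ := mem_nhdsLT_iff_exists_Ioo_subset.mp hC
  obtain ⟨t, hlt, ht1⟩ := exists_between (max_lt (Set.mem_Iio.mp hl) one_pos)
  obtain ⟨b, hb, hx₀b⟩ := ((hφ.htop.eventually
    (gt_mem_nhds ((le_max_right l 0).trans_lt hlt))).and (eventually_ge_atTop x₀)).exists
  obtain ⟨c, hc, hφc⟩ := intermediate_value_Icc' hx₀b hφ.hC1.continuous.continuousOn
    ⟨hb.le, hx₀ ▸ ht1.le⟩
  have hbound : ∀ x ∈ Set.Ico x₀ c, |-deriv φ x| ≤ √C * |1 - φ x| := by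
    intro x hx
    have hφx : t ≤ φ x := hφc ▸ hφ.hmono hx.2.le
    rcases (hrange x).2.eq_or_lt with h1 | h1
    · simp [deriv_eq_zero_of_eq_one hrange h1, h1]
    have hD : 0 < S.D (φ x) := S.hD_pos _ ⟨by linarith [le_max_right l 0], h1.le⟩
    have h2 : -(2 * S.potential (φ x)) ≤ C * ((1 - φ x) * S.D (φ x)) ^ 2 :=
      hlsub ⟨(le_max_left l 0).trans_lt (hlt.trans_le hφx), h1⟩
    rw [← hφ.sq_eq_neg_two_mul_potential_of_eq_one hDf hrange hx₀ x] at h2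
    have h3 : deriv φ x ^ 2 ≤ C * (1 - φ x) ^ 2 :=
      le_of_mul_le_mul_right (by linarith [h2]) (pow_pos hD 2)
    rw [abs_neg, ← Real.sqrt_sq_eq_abs (1 - φ x), ← Real.sqrt_mul' C (sq_nonneg _)]
    exact Real.abs_le_sqrt h3
  have := eqOn_zero_of_abs_deriv_le
    (fun x => ((hφ.hC1.differentiable one_ne_zero x).hasDerivAt).const_sub 1)
    (by simp [hx₀]) hbound ⟨hc.1, le_rfl⟩
  simp only [Pi.zero_apply] at this
  linarith

end StatFront

/-- The stationary Nagumo front arrives at the degenerate state at a unique finite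
point `ω₀`: `φ ≡ 0` on `[ω₀, ∞)`, `φ_x < 0` on `(-∞, ω₀)`, and `0 ≤ φ < 1` on `ℝ`. -/
theorem statement4 (S : NagumoSetup)
    (hDf : (∫ u in (0:ℝ)..1, S.D u * S.f u) = 0)
    (φ : ℝ → ℝ) (hφ : StatFront S φ) (hrange : ∀ x, 0 ≤ φ x ∧ φ x ≤ 1) :
    ∃! ω₀ : ℝ, (∀ x, ω₀ ≤ x → φ x = 0) ∧ (∀ x, x < ω₀ → deriv φ x < 0) ∧
      (∀ x, 0 ≤ φ x ∧ φ x < 1) := by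
  have hlt x : φ x < 1 := hφ.lt_one hDf hrange x
  obtain ⟨ω, hω⟩ := exists_forall_eq_zero_iff_le hφ.hC1.continuous hφ.hmono
    (fun x => (hrange x).1) (hφ.exists_eq_zero hrange)
    ((hφ.hbot.eventually (lt_mem_nhds one_pos)).exists.imp fun _ h => h.ne')
  have hderiv_zero : deriv φ ω = 0 :=
    IsLocalMin.deriv_eq_zero (Eventually.of_forall fun y => ((hω ω).2 le_rfl) ▸ (hrange y).1)
  refine ⟨ω, ⟨fun x hx => (hω x).2 hx, fun x hx => hφ.deriv_neg hDf ⟨?_, hlt x⟩,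
    fun x => ⟨(hrange x).1, hlt x⟩⟩, fun ω' ⟨hzero, hderiv, _⟩ => ?_⟩
  · exact (hrange x).1.lt_of_ne fun h => hx.not_ge ((hω x).1 h.symm)
  · refine le_antisymm ?_ ((hω ω').1 (hzero ω' le_rfl))
    by_contra! h
    exact (hderiv ω h).ne hderiv_zero
end
end
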